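/- arXiv:2510.19449 — 8 statements merged into one kernel-verified Lean document; each statement's English description precedes it below -/
import Mathlib

section
/- Let p be an odd prime and let c : ℕ → 𝔽_p be the p-Cantor sequence. Then for every k ∈ ℕ and every 0 ≤ i ≤ p^k − 1, one has c(i) = c(p^k − 1 − i). -/
/-- symmetry of the p-Cantor sequence: c(i) = c(p^k - 1 - i). -/
theorem cantor_symmetric (p : ℕ) (hp : p.Prime) (hodd : Odd p)
    (c : ℕ → ZMod p)
    (hc0 : c 0 = 1)
    (hc : ∀ n i : ℕ, i < p →
      c (p * n + i) =
        (if i % 2 = 0 then ((((p - 1) / 2).choose (i / 2) : ℕ) : ZMod p) else 0) * c n) :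
    ∀ k i : ℕ, i ≤ p ^ k - 1 → c i = c (p ^ k - 1 - i) := by
  have hp2 : 2 ≤ p := hp.two_le
  have hpm : p % 2 = 1 := Nat.odd_iff.mp hodd
  intro k
  induction k with
  | zero =>
    intro i hi
    simp only [pow_zero] at *
    have : i = 0 := by omega
    subst this
    rfl
  | succ k ih =>
    intro i hi
    set P := p ^ k with hPdef
    have hP1 : 1 ≤ P := Nat.one_le_pow _ _ (by omega)
    have hpk1 : p ^ (k + 1) = p * P := by rw [pow_succ]; ring
    set n := i / p with hn
    set j := i % p with hj
    have hjp : j < p := Nat.mod_lt _ (by omega)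
    have hi' : i = p * n + j := by rw [hn, hj, Nat.div_add_mod]
    have hnP : n < P := by
      have h1 : p * n ≤ i := by omega
      have h2 : i < p * P := by
        rw [hpk1] at hi
        have h3 : 1 ≤ p * P := Nat.mul_pos (by omega) (by omega)
        omega
      exact Nat.lt_of_mul_lt_mul_left (show p * n < p * P by omega)
    set m := P - 1 - n with hm
    have hnm : n + m + 1 = P := by omega
    have hC : p * P = p * n + p * m + p := by rw [← hnm]; ring
    have hidx : p ^ (k + 1) - 1 - i = p * m + (p - 1 - j) := by
      rw [hpk1, hi']
      generalize p * n = A at hC ⊢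
      generalize p * m = B at hC ⊢
      generalize p * P = D at hC ⊢
      omega
    have h1 := hc n j hjp
    have h2 := hc m (p - 1 - j) (by omega)
    rw [← hi'] at h1
    rw [hidx, h2, h1]
    have hpar : (p - 1 - j) % 2 = j % 2 := by omega
    have hnmid : c n = c m := by
      rw [hm]
      exact ih n (by omega)
    rw [hnmid]
    congr 1
    rw [hpar]
    by_cases h : j % 2 = 0
    · simp only [h, if_true]
      have h2' : (p - 1 - j) / 2 = (p - 1) / 2 - j / 2 := by omega
      rw [h2', Nat.choose_symm (by omega)]
    · simp [h]
end

section
/- Let p be an odd prime and let σ : ℕ → 𝔽_p be the pseudo-p-Singer sequence. Then for every k ≥ 1 and every 0 ≤ i ≤ (p^k − 1)/2, one has σ(i) = σ((p^k − 1)/2 − i). -/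
/-- symmetry of the pseudo-p-Singer sequence:
σ(i) = σ((p^k − 1)/2 − i) for 0 ≤ i ≤ (p^k − 1)/2. -/
theorem pseudoSinger_symmetric (p : ℕ) (hp : p.Prime) (hodd : Odd p)
    (σ : ℕ → ZMod p)
    (hσ0 : σ 0 = 1)
    (hσ : ∀ n i : ℕ, i < p →
      σ (p * n + i) = ((((p - 1) / 2).choose i : ℕ) : ZMod p) * σ n) :
    ∀ k i : ℕ, 1 ≤ k → i ≤ (p ^ k - 1) / 2 → σ i = σ ((p ^ k - 1) / 2 - i) := by
  have hp1 : 1 < p := hp.one_lt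
  have hpodd : p % 2 = 1 := Nat.odd_iff.mp hodd
  set p₂ := (p - 1) / 2 with hp2def
  have hp2 : p = 2 * p₂ + 1 := by omega
  have main : ∀ k i : ℕ, i ≤ (p ^ k - 1) / 2 → σ i = σ ((p ^ k - 1) / 2 - i) := by
    intro k
    induction k with
    | zero =>
      intro i hi
      simp only [pow_zero, Nat.sub_self, Nat.zero_div, Nat.le_zero] at hi ⊢
      subst hi
      simp
    | succ k ih =>
      intro i hi
      have hpk : p ^ k % 2 = 1 := by
        have h := Nat.pow_mod p k 2
        rw [hpodd, one_pow] at h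
        omega
      have hpk1 : 1 ≤ p ^ k := Nat.one_le_pow _ _ (by omega)
      set M := (p ^ k - 1) / 2 with hMdef
      have hM : p ^ k = 2 * M + 1 := by omega
      have hMs : (p ^ (k + 1) - 1) / 2 = p * M + p₂ := by
        have h1 : p ^ (k + 1) = p * (2 * M + 1) := by rw [pow_succ, hM]; ring
        have h2 : p * (2 * M + 1) = 2 * (p * M) + p := by ring
        omega
      have hrlt : i % p < p := Nat.mod_lt _ (by omega)
      have hdm : p * (i / p) + i % p = i := Nat.div_add_mod i p
      set n := i / p with hndef
      set r := i % p with hrdef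
      rw [hMs] at hi ⊢
      by_cases hr : r ≤ p₂
      · have hnM : n ≤ M := by
          by_contra h
          push_neg at h
          have h3 : p * (M + 1) ≤ p * n := Nat.mul_le_mul_left p h
          have h4 : p * (M + 1) = p * M + p := by ring
          omega
        have hsub : p * M + p₂ - i = p * (M - n) + (p₂ - r) := by
          have e1 : p * (M - n) + p * n = p * M := by
            rw [← Nat.mul_add]; congr 1; omega
          omega
        have h1 : σ i = ((p₂.choose r : ℕ) : ZMod p) * σ n := by
          rw [← hdm]; exact hσ n r hrlt
        have h2 : σ (p * M + p₂ - i) = ((p₂.choose r : ℕ) : ZMod p) * σ (M - n) := by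
          rw [hsub, hσ (M - n) (p₂ - r) (by omega), Nat.choose_symm hr]
        rw [h1, h2, ih n hnM]
      · push_neg at hr
        have hnM : n < M := by
          by_contra h
          push_neg at h
          have h3 : p * M ≤ p * n := Nat.mul_le_mul_left p h
          omega
        have h1 : σ i = 0 := by
          rw [← hdm, hσ n r hrlt, Nat.choose_eq_zero_of_lt hr]
          simp
        have hsub : p * M + p₂ - i = p * (M - 1 - n) + (p + p₂ - r) := by
          have e1 : p * (M - 1 - n) + p * (n + 1) = p * M := by
            rw [← Nat.mul_add]; congr 1; omega
          have e2 : p * (n + 1) = p * n + p := by ring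
          omega
        have h2 : σ (p * M + p₂ - i) = 0 := by
          rw [hsub, hσ (M - 1 - n) (p + p₂ - r) (by omega),
            Nat.choose_eq_zero_of_lt (by omega)]
          simp
        rw [h1, h2]
  intro k i _ hi
  exact main k i hi
end

section
/- Let p be an odd prime and let s : ℕ → 𝔽_p be the p-Singer sequence. Then for every k ≥ 1 and every 0 ≤ i ≤ p^k + 1, one has s(i) = s(p^k + 1 − i). -/
/-- symmetry of the p-Singer sequence:
s(i) = s(p^k + 1 − i) for 0 ≤ i ≤ p^k + 1. -/
theorem singer_symmetric (p : ℕ) (hp : p.Prime) (hodd : Odd p)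
    (σ s : ℕ → ZMod p)
    (hσ0 : σ 0 = 1)
    (hσ : ∀ n i : ℕ, i < p →
      σ (p * n + i) = ((((p - 1) / 2).choose i : ℕ) : ZMod p) * σ n)
    (hs : ∀ n i : ℕ, i < 2 * p →
      s (2 * p * n + i) =
        (if i % 2 = 0 then ((((p - 1) / 2 + 1).choose (i / 2) : ℕ) : ZMod p) else 0) * σ n) :
    ∀ k i : ℕ, 1 ≤ k → i ≤ p ^ k + 1 → s i = s (p ^ k + 1 - i) := by
  haveI : Fact p.Prime := ⟨hp⟩
  obtain ⟨m0, hm0⟩ := id hodd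
  have hp3 : 3 ≤ p := by
    have := hp.two_le
    omega
  set q : ℕ := (p - 1) / 2 with hqdef
  have hq : p = 2 * q + 1 := by omega
  have hp0 : 0 < p := by omega
  -- Lucas' theorem in ZMod form
  have lucas : ∀ a b : ℕ, ((a.choose b : ℕ) : ZMod p)
      = (((a % p).choose (b % p) : ℕ) : ZMod p) * (((a / p).choose (b / p) : ℕ) : ZMod p) := by
    intro a b
    have h := (Choose.choose_modEq_choose_mod_mul_choose_div_nat (p := p) (n := a) (k := b))
    have := (ZMod.natCast_eq_natCast_iff _ _ _).mpr h
    push_cast at this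
    exact this
  -- σ n = C(m, n) where 2m+1 = p^k, n < p^k
  have sigma_eq : ∀ k : ℕ, ∀ n m : ℕ, n < p ^ k → 2 * m + 1 = p ^ k →
      σ n = ((m.choose n : ℕ) : ZMod p) := by
    intro k
    induction k with
    | zero =>
      intro n m hn hm
      simp only [pow_zero] at hn hm
      have hn0 : n = 0 := by omega
      have hm0 : m = 0 := by omega
      simp [hn0, hm0, hσ0]
    | succ k ih =>
      intro n m hn hm
      obtain ⟨m', hm'⟩ := Odd.pow (n := k) hodd
      have hm'' : p ^ k = 2 * m' + 1 := by omega
      have hmsplit : m = q + p * m' := by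
        have h2 : 2 * (q + p * m') + 1 = p ^ (k + 1) := by
          rw [pow_succ, hm'', hq]; ring
        set A := p * m' with hA
        omega
      have hnd : n / p < p ^ k := by
        rw [Nat.div_lt_iff_lt_mul hp0]
        calc n < p ^ (k + 1) := hn
        _ = p ^ k * p := pow_succ p k
      have hstep := hσ (n / p) (n % p) (Nat.mod_lt _ hp0)
      rw [Nat.div_add_mod] at hstep
      rw [hstep, ih (n / p) m' hnd hm''.symm, lucas m n, hmsplit]
      have e1 : (q + p * m') % p = q := by
        rw [Nat.add_mul_mod_self_left, Nat.mod_eq_of_lt (by omega)]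
      have e2 : (q + p * m') / p = m' := by
        rw [Nat.add_mul_div_left _ _ hp0, Nat.div_eq_of_lt (by omega)]; omega
      rw [e1, e2]
  -- s at even arguments
  have s_even : ∀ u : ℕ, s (2 * u)
      = (((q + 1).choose (u % p) : ℕ) : ZMod p) * σ (u / p) := by
    intro u
    have hstep := hs (u / p) (2 * (u % p)) (by have := Nat.mod_lt u hp0; omega)
    have harg : 2 * p * (u / p) + 2 * (u % p) = 2 * u := by
      rw [mul_assoc, ← Nat.mul_add, Nat.div_add_mod]
    rw [harg] at hstep
    rw [hstep]
    have h1 : (2 * (u % p)) % 2 = 0 := by omega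
    have h2 : (2 * (u % p)) / 2 = u % p := by omega
    rw [if_pos h1, h2]
  -- s vanishes at odd arguments
  have s_odd : ∀ m : ℕ, m % 2 = 1 → s m = 0 := by
    intro m hm
    have hstep := hs (m / (2 * p)) (m % (2 * p)) (Nat.mod_lt _ (by omega))
    rw [Nat.div_add_mod] at hstep
    rw [hstep]
    have h1 : m % (2 * p) % 2 = 1 := by
      rw [Nat.mod_mod_of_dvd _ ⟨p, rfl⟩]; exact hm
    rw [if_neg (by omega), zero_mul]
  -- s(2u) = C(N, u) where 2N = p^(j+1)+1
  have s_eq : ∀ j u N : ℕ, u < p ^ (j + 1) → 2 * N = p ^ (j + 1) + 1 →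
      s (2 * u) = ((N.choose u : ℕ) : ZMod p) := by
    intro j u N hu hN
    obtain ⟨m', hm'⟩ := Odd.pow (n := j) hodd
    have hm'' : p ^ j = 2 * m' + 1 := by omega
    have hNsplit : N = (q + 1) + p * m' := by
      have h2 : 2 * ((q + 1) + p * m') = p ^ (j + 1) + 1 := by
        rw [pow_succ, hm'', hq]; ring
      set A := p * m' with hA
      omega
    have hud : u / p < p ^ j := by
      rw [Nat.div_lt_iff_lt_mul hp0]
      calc u < p ^ (j + 1) := hu
      _ = p ^ j * p := pow_succ p j
    rw [s_even u, sigma_eq j (u / p) m' hud hm''.symm, lucas N u, hNsplit]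
    have e1 : ((q + 1) + p * m') % p = q + 1 := by
      rw [Nat.add_mul_mod_self_left, Nat.mod_eq_of_lt (by omega)]
    have e2 : ((q + 1) + p * m') / p = m' := by
      rw [Nat.add_mul_div_left _ _ hp0, Nat.div_eq_of_lt (by omega)]; omega
    rw [e1, e2]
  -- main proof
  intro k i hk hi
  obtain ⟨j, rfl⟩ : ∃ j, k = j + 1 := ⟨k - 1, by omega⟩
  obtain ⟨N0, hN0⟩ := Odd.pow (n := j + 1) hodd
  have hN : 2 * (N0 + 1) = p ^ (j + 1) + 1 := by omega
  set N := N0 + 1 with hNdef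
  have hpk3 : 3 ≤ p ^ (j + 1) := le_trans hp3 (Nat.le_self_pow (by omega) p)
  rcases Nat.even_or_odd i with hpar | hpar
  · -- i even
    obtain ⟨u, rfl⟩ : ∃ u, i = 2 * u := by
      rcases hpar with ⟨u, hu⟩; exact ⟨u, by omega⟩
    have huN : u ≤ N := by omega
    have hsub : p ^ (j + 1) + 1 - 2 * u = 2 * (N - u) := by omega
    rw [hsub, s_eq j u N (by omega) hN, s_eq j (N - u) N (by omega) hN,
      Nat.choose_symm huN]
  · -- i odd: both sides vanish
    have h1 : i % 2 = 1 := Nat.odd_iff.mp hpar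
    have h2 : (p ^ (j + 1) + 1 - i) % 2 = 1 := by omega
    rw [s_odd i h1, s_odd _ h2]
end

section
/- Let p be an odd prime, let c : ℕ → 𝔽_p be the p-Cantor sequence and let s : ℕ → 𝔽_p be the p-Singer sequence. Then in the formal power series ring 𝔽_p[[X]], one has (∑_{i≥0} c(i)·X^i) · (∑_{i≥0} s(i)·X^i) = 1. (In the language of Laurent series in t^{−1}, the Laurent series of the p-Cantor and p-Singer sequences are multiplicative inverses of one another.) -/
/-!
Write `A = 1 + X²` and `C`, `Σ`, `S` for the series of `c`, `σ`, `s`. The recursions say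
`C = A^p₂ · C(X^p)`, `Σ = (1 + X)^p₂ · Σ(X^p)` and `S = A^(p₂+1) · Σ(X^(2p))`. With `T = Σ(X²)`
we get `T = A^p₂ · T(X^p)` and `S = A^(p₂+1) · T(X^p)`, so for `G = C · T` the product `F = C · S`
satisfies both `F = A^p · G(X^p)` and `F = A · G`. In characteristic `p`, `A^p = A(X^p)`, hence
`F = (A · G)(X^p) = F(X^p)`; a power series fixed by `X ↦ X^p` with constant term `1` is `1`.
-/

namespace PowerSeries

variable {R : Type*} [CommRing R]

theorem coeff_one_add_X_pow (e i : ℕ) : coeff i ((1 + X : R⟦X⟧) ^ e) = e.choose i := by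
  rw [← Polynomial.coeff_one_add_X_pow R e i, ← Polynomial.coeff_coe]
  simp

theorem coeff_one_add_X_sq_pow (e i : ℕ) :
    coeff i ((1 + X ^ 2 : R⟦X⟧) ^ e) = if i % 2 = 0 then (e.choose (i / 2) : R) else 0 := by
  have h : (1 + X ^ 2 : R⟦X⟧) ^ e = expand 2 two_ne_zero ((1 + X) ^ e) := by simp
  simp only [h, coeff_expand, coeff_one_add_X_pow, Nat.dvd_iff_mod_eq_zero]

theorem coeff_one_add_X_pow_of_lt {e i : ℕ} (h : e < i) : coeff i ((1 + X : R⟦X⟧) ^ e) = 0 := by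
  rw [coeff_one_add_X_pow, Nat.choose_eq_zero_of_lt h, Nat.cast_zero]

theorem coeff_one_add_X_sq_pow_of_lt {e i : ℕ} (h : 2 * e < i) :
    coeff i ((1 + X ^ 2 : R⟦X⟧) ^ e) = 0 := by
  rw [coeff_one_add_X_sq_pow]
  split_ifs with hi
  · rw [Nat.choose_eq_zero_of_lt (by omega), Nat.cast_zero]
  · rfl

theorem expand_comm {a b : ℕ} (ha : a ≠ 0) (hb : b ≠ 0) (φ : R⟦X⟧) :
    expand a ha (expand b hb φ) = expand b hb (expand a ha φ) := by
  simp only [← expand_mul, Nat.mul_comm a b]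

theorem eq_zero_of_expand_eq_self {k : ℕ} (hk : k ≠ 0) (hk1 : k ≠ 1) {φ : R⟦X⟧}
    (hφ : expand k hk φ = φ) (h0 : constantCoeff φ = 0) : φ = 0 := by
  rw [← order_eq_top]
  have hord := order_expand k hk φ
  rw [hφ] at hord
  have hne : φ.order ≠ 0 := order_ne_zero_iff_constCoeff_eq_zero.mpr h0
  generalize φ.order = d at hord hne
  induction d with
  | top => rfl
  | coe n =>
    rw [nsmul_eq_mul] at hord
    exact absurd ((Nat.mul_eq_right (by exact_mod_cast hne)).mp (by exact_mod_cast hord.symm)) hk1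

theorem one_add_X_pow_pow_char (p m : ℕ) [Fact p.Prime] [CharP R p] :
    (1 + X ^ m : R⟦X⟧) ^ p = expand p (Fact.out : p.Prime).ne_zero (1 + X ^ m) := by
  have : CharP R⟦X⟧ p := charP_of_injective_algebraMap C_injective p
  rw [add_pow_char, one_pow, map_add, map_one, map_pow, expand_X, ← pow_mul, ← pow_mul, mul_comm]

theorem mk_eq_mul_expand {k : ℕ} (hk : k ≠ 0) {f g : ℕ → R} {B : R⟦X⟧}
    (hB : ∀ i, k ≤ i → coeff i B = 0)
    (hf : ∀ n i, i < k → f (k * n + i) = coeff i B * g n) :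
    mk f = B * expand k hk (mk g) := by
  have hk_pos : 0 < k := Nat.pos_of_ne_zero hk
  ext m
  obtain ⟨n, i, hi, rfl⟩ : ∃ n i, i < k ∧ m = k * n + i :=
    ⟨m / k, m % k, Nat.mod_lt m hk_pos, (Nat.div_add_mod m k).symm⟩
  rw [coeff_mk, hf n i hi, coeff_mul, Finset.sum_eq_single (i, k * n)]
  · rw [coeff_expand_mul, coeff_mk]
  · rintro ⟨a, b⟩ hab hne
    rw [Finset.HasAntidiagonal.mem_antidiagonal] at hab
    by_cases ha : k ≤ a
    · rw [hB a ha, zero_mul]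
    rw [coeff_expand]
    split_ifs with hb
    · obtain ⟨t, rfl⟩ := hb
      have h₁ := (Nat.div_mod_unique hk_pos).2 ⟨hab, Nat.lt_of_not_le ha⟩
      have h₂ := (Nat.div_mod_unique hk_pos).2 ⟨Nat.add_comm i (k * n), hi⟩
      obtain ⟨rfl, rfl⟩ : t = n ∧ a = i := ⟨h₁.1.symm.trans h₂.1, h₁.2.symm.trans h₂.2⟩
      exact absurd rfl hne
    · rw [mul_zero]
  · exact fun h => absurd (Finset.HasAntidiagonal.mem_antidiagonal.mpr (Nat.add_comm i (k * n))) h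

end PowerSeries

open PowerSeries

theorem mul_eq_one_of_cantor_singer_equations {R : Type*} [CommRing R] {p p₂ : ℕ} (hp : p.Prime)
    [CharP R p] (hp₂ : p = 2 * p₂ + 1) {C P S : R⟦X⟧}
    (hC : C = (1 + X ^ 2) ^ p₂ * expand p hp.ne_zero C)
    (hP : P = (1 + X) ^ p₂ * expand p hp.ne_zero P)
    (hS : S = (1 + X ^ 2) ^ (p₂ + 1) * expand (2 * p) (by simp [hp.ne_zero]) P)
    (hC0 : constantCoeff C = 1) (hS0 : constantCoeff S = 1) :
    C * S = 1 := by
  have : Fact p.Prime := ⟨hp⟩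
  have hp0 := hp.ne_zero
  set A : R⟦X⟧ := 1 + X ^ 2
  have hAp : A ^ p = A * A ^ p₂ * A ^ p₂ := by rw [hp₂]; ring
  have hT : expand 2 two_ne_zero P = A ^ p₂ * expand p hp0 (expand 2 two_ne_zero P) := by
    conv_lhs => rw [hP]
    rw [map_mul, map_pow, map_add, map_one, expand_X, expand_comm]
  set T := expand 2 two_ne_zero P
  have hPT : expand (2 * p) (by simp [hp0]) P = expand p hp0 T := by
    rw [expand_mul, expand_comm]
  have hF : C * S = A ^ p * expand p hp0 (C * T) := by
    rw [hS, hPT, map_mul, hAp]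
    conv_lhs => rw [hC]
    ring
  have hAF : A * (C * T) = C * S := by
    rw [hF, map_mul, hAp]
    conv_lhs => rw [hC, hT]
    ring
  have hfix : expand p hp0 (C * S) = C * S := by
    rw [← hAF, map_mul, ← one_add_X_pow_pow_char]
    exact (hAF.trans hF).symm
  exact sub_eq_zero.mp <| eq_zero_of_expand_eq_self hp0 hp.one_lt.ne' (φ := C * S - 1)
    (by rw [map_sub, map_one, hfix]) (by simp [hC0, hS0])

/-- the power series of the p-Cantor and p-Singer sequences
are multiplicative inverses of one another in 𝔽_p[[X]]. -/
theorem cantor_singer_inverse (p : ℕ) (hp : p.Prime) (hodd : Odd p)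
    (c σ s : ℕ → ZMod p)
    (hc0 : c 0 = 1)
    (hc : ∀ n i : ℕ, i < p →
      c (p * n + i) =
        (if i % 2 = 0 then ((((p - 1) / 2).choose (i / 2) : ℕ) : ZMod p) else 0) * c n)
    (hσ0 : σ 0 = 1)
    (hσ : ∀ n i : ℕ, i < p →
      σ (p * n + i) = ((((p - 1) / 2).choose i : ℕ) : ZMod p) * σ n)
    (hs : ∀ n i : ℕ, i < 2 * p →
      s (2 * p * n + i) =
        (if i % 2 = 0 then ((((p - 1) / 2 + 1).choose (i / 2) : ℕ) : ZMod p) else 0) * σ n) :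
    PowerSeries.mk c * PowerSeries.mk s = 1 := by
  have hp₂ : p = 2 * ((p - 1) / 2) + 1 := by obtain ⟨k, rfl⟩ := hodd; omega
  refine mul_eq_one_of_cantor_singer_equations (P := mk σ) hp hp₂ ?_ ?_ ?_ (by simpa using hc0) ?_
  · refine mk_eq_mul_expand _ (fun i hi => coeff_one_add_X_sq_pow_of_lt (by omega)) ?_
    simpa only [coeff_one_add_X_sq_pow] using hc
  · refine mk_eq_mul_expand _ (fun i hi => coeff_one_add_X_pow_of_lt (by omega)) ?_
    simpa only [coeff_one_add_X_pow] using hσ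
  · refine mk_eq_mul_expand _ (fun i hi => coeff_one_add_X_sq_pow_of_lt ?_) ?_
    · have := hp.two_le
      omega
    · simpa only [coeff_one_add_X_sq_pow] using hs
  · simpa [hσ0] using hs 0 0 (by have := hp.pos; omega)
end

section
/- Let p be an odd prime and let F_{0,∞} ⊆ [0,1]² be the set of all pairs (x,y) for which there exist sequences (x_n)_{n≥1} and (y_n)_{n≥1} with values in {0,1,…,p−1} such that x = ∑_{n≥1} x_n·p^{−n}, y = ∑_{n≥1} y_n·p^{−n}, and x_n ≡ y_n (mod 2) for every n ≥ 1. Then the Hausdorff dimension of F_{0,∞} equals log((p²+1)/2)/log p. -/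
/-!
The set is the self-similar carpet of the `N = (p² + 1) / 2` digit pairs of equal parity, so
its dimension is `log_p N`. Covering it by the `N ^ n` squares of side `p⁻ⁿ` indexed by digit
words of length `n` gives `μH[log_p N] ≤ 1`. For the lower bound, push the uniform product
measure on digit sequences to the carpet: the level-`n` squares have integer corners `p⁻ⁿ c`, and
a set of diameter `≤ p⁻ⁿ` only meets squares whose corners lie in a `5 × 5` box, so it carries
mass `≤ 25 N⁻ⁿ`; the mass distribution principle then gives `μH[log_p N] > 0`.
-/

open Finset Set Filter Topology MeasureTheory Metric Real
open scoped ENNReal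

section Digits
variable {p : ℕ} {a b : ℕ → Fin p}

/-- The integer `a₀ p^(n-1) + ⋯ + a_(n-1)` whose quotient by `p ^ n` is the truncation of
`ofDigits a` after `n` digits. -/
def digitPrefix (a : ℕ → Fin p) : ℕ → ℕ
  | 0 => 0
  | n + 1 => p * digitPrefix a n + a n

lemma eq_of_digitPrefix_eq {n : ℕ} (h : digitPrefix a n = digitPrefix b n) :
    ∀ k < n, a k = b k := by
  induction n with
  | zero => simp
  | succ n ih =>
    simp only [digitPrefix] at h
    have hn : a n = b n := Fin.ext <| by
      simpa [Nat.mul_add_mod, Nat.mod_eq_of_lt] using congrArg (· % p) h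
    have hpre : digitPrefix a n = digitPrefix b n := by
      rw [hn] at h
      exact Nat.eq_of_mul_eq_mul_left (Fin.pos (a 0)) (by omega)
    intro k hk
    rcases Nat.lt_succ_iff_lt_or_eq.mp hk with hk | rfl
    exacts [ih hpre k hk, hn]

lemma digitPrefix_eq_pow_mul_sum (n : ℕ) :
    (digitPrefix a n : ℝ) = p ^ n * ∑ k ∈ range n, ofDigitsTerm a k := by
  induction n with
  | zero => simp [digitPrefix]
  | succ n ih =>
    have hp : (p : ℝ) ≠ 0 := by exact_mod_cast (Fin.pos (a 0)).ne'
    rw [digitPrefix, Nat.cast_add, Nat.cast_mul, ih, sum_range_succ, ofDigitsTerm]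
    field_simp
    ring

lemma pow_mul_ofDigits_mem_Icc (n : ℕ) :
    p ^ n * ofDigits a ∈ Icc (digitPrefix a n : ℝ) (digitPrefix a n + 1) := by
  have hp : (p : ℝ) ^ n ≠ 0 := pow_ne_zero _ (by exact_mod_cast (Fin.pos (a 0)).ne')
  rw [ofDigits_eq_sum_add_ofDigits a n, mul_add, ← mul_assoc, mul_inv_cancel₀ hp, one_mul,
    ← digitPrefix_eq_pow_mul_sum]
  exact ⟨le_add_of_nonneg_right (ofDigits_nonneg _), by grw [ofDigits_le_one]⟩

lemma digitPrefix_le_add_two {n : ℕ} (h : |ofDigits a - ofDigits b| ≤ ((p : ℝ) ^ n)⁻¹) :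
    digitPrefix a n ≤ digitPrefix b n + 2 := by
  have hp : (0 : ℝ) < p ^ n := pow_pos (by exact_mod_cast Fin.pos (a 0)) n
  have hab : p ^ n * ofDigits a ≤ p ^ n * ofDigits b + 1 := by
    have := mul_le_mul_of_nonneg_left (abs_le.mp h).2 hp.le
    rw [mul_sub, mul_inv_cancel₀ hp.ne'] at this
    linarith
  have ha := pow_mul_ofDigits_mem_Icc (a := a) n
  have hb := pow_mul_ofDigits_mem_Icc (a := b) n
  have : (digitPrefix a n : ℝ) ≤ digitPrefix b n + 2 := by linarith [ha.1, hb.2]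
  exact_mod_cast this

end Digits

lemma ENNReal.natCast_rpow_logb {p N : ℕ} (hp : 1 < p) (hN : 0 < N) :
    (p : ℝ≥0∞) ^ logb p N = N := by
  rw [← ENNReal.ofReal_natCast, ENNReal.ofReal_rpow_of_nonneg (by positivity)
    (logb_nonneg (by exact_mod_cast hp) (by exact_mod_cast hN)),
    rpow_logb (by positivity) (by exact_mod_cast hp.ne') (by exact_mod_cast hN),
    ENNReal.ofReal_natCast]

lemma ENNReal.pow_inv_rpow_logb {p N : ℕ} (hp : 1 < p) (hN : 0 < N) (n : ℕ) :
    (((p : ℝ≥0∞) ^ n)⁻¹) ^ logb p N = ((N : ℝ≥0∞) ^ n)⁻¹ := by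
  rw [ENNReal.inv_rpow, ← ENNReal.rpow_natCast, ← ENNReal.rpow_mul, mul_comm,
    ENNReal.rpow_mul, ENNReal.natCast_rpow_logb hp hN, ENNReal.rpow_natCast]

lemma ENNReal.ofReal_inv_natCast_pow {p : ℕ} (hp : 0 < p) (n : ℕ) :
    ENNReal.ofReal ((p : ℝ) ^ n)⁻¹ = ((p : ℝ≥0∞) ^ n)⁻¹ := by
  rw [ENNReal.ofReal_inv_of_pos (by positivity), ENNReal.ofReal_pow (by positivity),
    ENNReal.ofReal_natCast]

theorem measure_univ_div_le_hausdorffMeasure {X Y : Type*} [EMetricSpace X] [MeasurableSpace X]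
    [BorelSpace X] [MeasurableSpace Y] (μ : Measure Y) {f : Y → X} {s : Set X} (hf : range f ⊆ s)
    {d : ℝ} {r C : ℝ≥0∞} (hr : 0 < r) (h : ∀ U, ediam U ≤ r → μ (f ⁻¹' U) ≤ C * ediam U ^ d) :
    μ univ / C ≤ μH[d] s := by
  rw [Measure.hausdorffMeasure_apply]
  refine le_iSup₂_of_le r hr <| le_iInf₂ fun t hst => le_iInf fun htr => ?_
  refine ENNReal.div_le_of_le_mul' ?_
  calc μ univ ≤ μ (⋃ n, f ⁻¹' t n) := by
        rw [← preimage_iUnion]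
        exact measure_mono fun y _ => hst (hf (mem_range_self y))
    _ ≤ ∑' n, μ (f ⁻¹' t n) := measure_iUnion_le _
    _ ≤ ∑' n, C * ⨆ _ : (t n).Nonempty, ediam (t n) ^ d := by
        refine ENNReal.tsum_le_tsum fun n => ?_
        rcases (t n).eq_empty_or_nonempty with ht | ht
        · simp [ht]
        · rw [iSup_pos ht]
          exact h _ (htr n)
    _ = C * ∑' n, ⨆ _ : (t n).Nonempty, ediam (t n) ^ d := ENNReal.tsum_mul_left

lemma exists_pow_inv_lt_le {p : ℕ} (hp : 1 < p) {δ : ℝ≥0∞} (hδ₀ : δ ≠ 0) (hδ₁ : δ ≤ 1) :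
    ∃ n : ℕ, ((p : ℝ≥0∞) ^ (n + 1))⁻¹ < δ ∧ δ ≤ ((p : ℝ≥0∞) ^ n)⁻¹ := by
  have hex : ∃ n, ((p : ℝ≥0∞) ^ n)⁻¹ < δ := by
    obtain ⟨k, hk⟩ := ENNReal.exists_inv_nat_lt hδ₀
    refine ⟨k, lt_of_le_of_lt (ENNReal.inv_le_inv.2 ?_) hk⟩
    exact_mod_cast (Nat.lt_pow_self hp).le
  obtain ⟨n, hn⟩ : ∃ n, Nat.find hex = n + 1 := by
    refine Nat.exists_eq_add_one.2 (Nat.pos_of_ne_zero fun h0 => ?_)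
    have := Nat.find_spec hex
    rw [h0, pow_zero, inv_one] at this
    exact this.not_ge hδ₁
  refine ⟨n, hn ▸ Nat.find_spec hex, not_lt.1 (Nat.find_min hex (by omega))⟩

lemma le_mul_rpow_logb_of_forall_le {p N : ℕ} (hp : 1 < p) (hN : 1 < N) {m C δ : ℝ≥0∞}
    (hC : C ≠ ⊤) (hδ : δ ≤ 1)
    (h : ∀ n : ℕ, δ ≤ ((p : ℝ≥0∞) ^ n)⁻¹ → m ≤ C * ((N : ℝ≥0∞) ^ n)⁻¹) :
    m ≤ C * N * δ ^ logb p N := by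
  rcases eq_or_ne δ 0 with rfl | hδ₀
  · have hlim : Tendsto (fun n : ℕ => C * ((N : ℝ≥0∞) ^ n)⁻¹) atTop (𝓝 0) := by
      simp_rw [ENNReal.inv_pow]
      simpa using ENNReal.Tendsto.const_mul (ENNReal.tendsto_pow_atTop_nhds_zero_of_lt_one
        (ENNReal.inv_lt_one.2 (by exact_mod_cast hN))) (Or.inr hC)
    exact (ge_of_tendsto' hlim fun n => h n zero_le).trans zero_le
  obtain ⟨n, hlt, hle⟩ := exists_pow_inv_lt_le hp hδ₀ hδ
  have hN₀ : (N : ℝ≥0∞) ≠ 0 := by exact_mod_cast (by omega : N ≠ 0)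
  calc m ≤ C * ((N : ℝ≥0∞) ^ n)⁻¹ := h n hle
    _ = C * N * ((N : ℝ≥0∞) ^ (n + 1))⁻¹ := by
        rw [pow_succ, ENNReal.mul_inv (Or.inr (ENNReal.natCast_ne_top N)) (Or.inr hN₀),
          mul_comm ((N : ℝ≥0∞) ^ n)⁻¹, ← mul_assoc, mul_assoc C,
          ENNReal.mul_inv_cancel hN₀ (ENNReal.natCast_ne_top N), mul_one]
    _ = C * N * (((p : ℝ≥0∞) ^ (n + 1))⁻¹) ^ logb p N := by
        rw [ENNReal.pow_inv_rpow_logb hp (by omega)]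
    _ ≤ C * N * δ ^ logb p N := by
        gcongr
        exact logb_nonneg (by exact_mod_cast hp) (by exact_mod_cast hN.le)

section UniformSequences
variable (α : Type*) [Fintype α] [Nonempty α] [MeasurableSpace α]

noncomputable def uniformSequences : Measure (ℕ → α) :=
  Measure.infinitePi fun _ => (PMF.uniformOfFintype α).toMeasure

instance : IsProbabilityMeasure (uniformSequences α) := by
  unfold uniformSequences
  infer_instance

variable {α}

lemma uniformSequences_cylinder [MeasurableSingletonClass α] (ω' : ℕ → α) (n : ℕ) :
    uniformSequences α {ω | ∀ k < n, ω k = ω' k} = ((Fintype.card α : ℝ≥0∞) ^ n)⁻¹ := by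
  have hcyl : {ω | ∀ k < n, ω k = ω' k} = Set.pi (range n : Finset ℕ) fun k => {ω' k} := by
    ext
    simp
  rw [hcyl, uniformSequences, Measure.infinitePi_pi
    (μ := fun _ => (PMF.uniformOfFintype α).toMeasure) fun _ _ => measurableSet_singleton _]
  simp only [PMF.toMeasure_apply_singleton _ _ (measurableSet_singleton _),
    PMF.uniformOfFintype_apply, prod_const, card_range, ENNReal.inv_pow]

end UniformSequences

section Carpet
variable {p : ℕ} {D : Finset (Fin p × Fin p)}

noncomputable def carpetPoint (ω : ℕ → D) : ℝ × ℝ :=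
  (ofDigits fun k => (ω k).val.1, ofDigits fun k => (ω k).val.2)

variable (D) in
def carpet : Set (ℝ × ℝ) := range (carpetPoint (D := D))

def carpetPrefix (ω : ℕ → D) (n : ℕ) : ℕ × ℕ :=
  (digitPrefix (fun k => (ω k).val.1) n, digitPrefix (fun k => (ω k).val.2) n)

lemma edist_carpetPoint_le {ω ω' : ℕ → D} {n : ℕ} (h : ∀ k < n, ω k = ω' k) :
    edist (carpetPoint ω) (carpetPoint ω') ≤ ((p : ℝ≥0∞) ^ n)⁻¹ := by
  rw [← ENNReal.ofReal_inv_natCast_pow (Fin.pos (ω 0).val.1), edist_le_ofReal (by positivity),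
    Prod.dist_eq, Real.dist_eq, Real.dist_eq]
  exact max_le (abs_ofDigits_sub_ofDigits_le fun k hk => by rw [h k hk])
    (abs_ofDigits_sub_ofDigits_le fun k hk => by rw [h k hk])

lemma eq_of_carpetPrefix_eq {ω ω' : ℕ → D} {n : ℕ} (h : carpetPrefix ω n = carpetPrefix ω' n) :
    ∀ k < n, ω k = ω' k := by
  simp only [carpetPrefix, Prod.mk.injEq] at h
  intro k hk
  exact Subtype.ext <| Prod.ext (eq_of_digitPrefix_eq h.1 k hk) (eq_of_digitPrefix_eq h.2 k hk)

def prefixBox (c : ℕ × ℕ) : Finset (ℕ × ℕ) :=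
  Finset.Icc (c.1 - 2) (c.1 + 2) ×ˢ Finset.Icc (c.2 - 2) (c.2 + 2)

lemma card_prefixBox_le (c : ℕ × ℕ) : #(prefixBox c) ≤ 25 := by
  rw [prefixBox, card_product, Nat.card_Icc, Nat.card_Icc]
  exact (Nat.mul_le_mul (by omega : c.1 + 2 + 1 - (c.1 - 2) ≤ 5)
    (by omega : c.2 + 2 + 1 - (c.2 - 2) ≤ 5)).trans (by norm_num)

lemma carpetPrefix_mem_prefixBox {ω ω' : ℕ → D} {n : ℕ}
    (h : edist (carpetPoint ω) (carpetPoint ω') ≤ ((p : ℝ≥0∞) ^ n)⁻¹) :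
    carpetPrefix ω n ∈ prefixBox (carpetPrefix ω' n) := by
  rw [← ENNReal.ofReal_inv_natCast_pow (Fin.pos (ω 0).val.1), edist_le_ofReal (by positivity),
    Prod.dist_eq, Real.dist_eq, Real.dist_eq, max_le_iff] at h
  have h₁ := digitPrefix_le_add_two h.1
  have h₁' := digitPrefix_le_add_two ((abs_sub_comm _ _).trans_le h.1)
  have h₂ := digitPrefix_le_add_two h.2
  have h₂' := digitPrefix_le_add_two ((abs_sub_comm _ _).trans_le h.2)
  simp only [carpetPrefix, prefixBox, Finset.mem_product, Finset.mem_Icc]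
  omega

lemma hausdorffMeasure_carpet_le_one (hp : 1 < p) (hD : D.Nonempty) :
    μH[logb p #D] (carpet D) ≤ 1 := by
  have hs : 0 ≤ logb p #D := logb_nonneg (by exact_mod_cast hp) (by exact_mod_cast hD.card_pos)
  let cylinder (n : ℕ) (w : Fin n → D) : Set (ℝ × ℝ) :=
    carpetPoint '' {ω | ∀ k : Fin n, ω k = w k}
  have hdiam (n : ℕ) (w : Fin n → D) : ediam (cylinder n w) ≤ ((p : ℝ≥0∞) ^ n)⁻¹ := by
    refine ediam_le ?_
    rintro _ ⟨ω, hω, rfl⟩ _ ⟨ω', hω', rfl⟩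
    exact edist_carpetPoint_le fun k hk => (hω ⟨k, hk⟩).trans (hω' ⟨k, hk⟩).symm
  have hcover (n : ℕ) : carpet D ⊆ ⋃ w, cylinder n w := by
    rintro _ ⟨ω, rfl⟩
    exact mem_iUnion.2 ⟨fun k => ω k, ω, fun _ => rfl, rfl⟩
  have hsum (n : ℕ) : ∑ w, ediam (cylinder n w) ^ logb p #D ≤ 1 := by
    calc ∑ w, ediam (cylinder n w) ^ logb p #D
        ≤ ∑ _w : Fin n → D, (((p : ℝ≥0∞) ^ n)⁻¹) ^ logb p #D :=
          sum_le_sum fun w _ => ENNReal.rpow_le_rpow (hdiam n w) hs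
      _ = (#D : ℝ≥0∞) ^ n * ((#D : ℝ≥0∞) ^ n)⁻¹ := by
          rw [ENNReal.pow_inv_rpow_logb hp hD.card_pos, sum_const, card_univ, Fintype.card_fun,
            Fintype.card_fin, Fintype.card_coe, nsmul_eq_mul, Nat.cast_pow]
      _ ≤ 1 := ENNReal.mul_inv_le_one _
  have hr : Tendsto (fun n : ℕ => ((p : ℝ≥0∞) ^ n)⁻¹) atTop (𝓝 0) := by
    simp_rw [ENNReal.inv_pow]
    exact ENNReal.tendsto_pow_atTop_nhds_zero_of_lt_one
      (ENNReal.inv_lt_one.2 (by exact_mod_cast hp))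
  calc μH[logb p #D] (carpet D)
      ≤ liminf (fun n => ∑ w, ediam (cylinder n w) ^ logb p #D) atTop :=
        Measure.hausdorffMeasure_le_liminf_sum _ _ _ hr cylinder (.of_forall hdiam)
          (.of_forall hcover)
    _ ≤ liminf (fun _ : ℕ => (1 : ℝ≥0∞)) atTop := liminf_le_liminf (.of_forall hsum)
    _ = 1 := liminf_const 1

lemma uniformSequences_preimage_carpetPoint_le [Nonempty D] {U : Set (ℝ × ℝ)} {n : ℕ}
    (hU : ediam U ≤ ((p : ℝ≥0∞) ^ n)⁻¹) :
    uniformSequences D (carpetPoint ⁻¹' U) ≤ 25 * ((#D : ℝ≥0∞) ^ n)⁻¹ := by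
  rcases (carpetPoint ⁻¹' U).eq_empty_or_nonempty with hU₀ | ⟨ω₀, hω₀⟩
  · rw [hU₀, measure_empty]
    exact zero_le
  have hsub : carpetPoint ⁻¹' U ⊆
      ⋃ c ∈ prefixBox (carpetPrefix ω₀ n), {ω : ℕ → D | carpetPrefix ω n = c} :=
    fun ω hω => mem_iUnion₂.2 ⟨_, carpetPrefix_mem_prefixBox
      ((edist_le_ediam_of_mem (s := U) hω hω₀).trans hU), rfl⟩
  have hfiber (c : ℕ × ℕ) :
      uniformSequences D {ω | carpetPrefix ω n = c} ≤ ((#D : ℝ≥0∞) ^ n)⁻¹ := by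
    rcases eq_empty_or_nonempty {ω : ℕ → D | carpetPrefix ω n = c} with h | ⟨ω', hω'⟩
    · simp [h]
    calc uniformSequences D {ω | carpetPrefix ω n = c}
        ≤ uniformSequences D {ω | ∀ k < n, ω k = ω' k} :=
          measure_mono fun ω hω => eq_of_carpetPrefix_eq (hω.trans hω'.symm)
      _ = ((#D : ℝ≥0∞) ^ n)⁻¹ := by rw [uniformSequences_cylinder, Fintype.card_coe]
  calc uniformSequences D (carpetPoint ⁻¹' U)
      ≤ ∑ c ∈ prefixBox (carpetPrefix ω₀ n), uniformSequences D {ω | carpetPrefix ω n = c} :=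
        (measure_mono hsub).trans (measure_biUnion_finset_le _ _)
    _ ≤ ∑ _c ∈ prefixBox (carpetPrefix ω₀ n), ((#D : ℝ≥0∞) ^ n)⁻¹ :=
        sum_le_sum fun c _ => hfiber c
    _ ≤ 25 * ((#D : ℝ≥0∞) ^ n)⁻¹ := by
        rw [sum_const, nsmul_eq_mul]
        gcongr
        exact_mod_cast card_prefixBox_le _

lemma hausdorffMeasure_carpet_ne_zero (hp : 1 < p) (hD : 1 < #D) :
    μH[logb p #D] (carpet D) ≠ 0 := by
  have : Nonempty D := (card_pos.1 (by omega)).to_subtype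
  have key : uniformSequences D univ / (25 * #D) ≤ μH[logb p #D] (carpet D) :=
    measure_univ_div_le_hausdorffMeasure _ subset_rfl one_pos fun U hU =>
      le_mul_rpow_logb_of_forall_le hp hD (by simp) hU fun _ hn =>
        uniformSequences_preimage_carpetPoint_le hn
  rw [measure_univ] at key
  have hpos : 0 < 1 / (25 * (#D : ℝ≥0∞)) :=
    ENNReal.div_pos_iff.2 ⟨one_ne_zero, ENNReal.mul_ne_top (by simp) (by simp)⟩
  exact (hpos.trans_le key).ne'

theorem dimH_carpet (hp : 1 < p) (hD : 1 < #D) :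
    dimH (carpet D) = ENNReal.ofReal (logb p #D) := by
  have hs : 0 ≤ logb p #D := logb_nonneg (by exact_mod_cast hp) (by exact_mod_cast hD.le)
  rw [ENNReal.ofReal, dimH_of_hausdorffMeasure_ne_zero_ne_top] <;> rw [Real.coe_toNNReal _ hs]
  · exact hausdorffMeasure_carpet_ne_zero hp hD
  · exact ((hausdorffMeasure_carpet_le_one hp (card_pos.1 (by omega))).trans_lt
      ENNReal.one_lt_top).ne

end Carpet

def parityDigits (p : ℕ) : Finset (Fin p × Fin p) := {d | (d.1 : ℕ) % 2 = d.2 % 2}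

lemma card_filter_fin_mod_two_eq_one (p : ℕ) : #{a : Fin p | (a : ℕ) % 2 = 1} = p / 2 := by
  rw [← Nat.card_multiples p 2, card_filter, card_filter,
    Fin.sum_univ_eq_sum_range (fun a => if a % 2 = 1 then 1 else 0)]
  refine sum_congr rfl fun a _ => ?_
  congr 1
  simp only [eq_iff_iff]
  omega

lemma card_parityDigits {p : ℕ} (hp : Odd p) : 2 * #(parityDigits p) = p ^ 2 + 1 := by
  set E : Finset (Fin p) := {a | (a : ℕ) % 2 = 0}
  set O : Finset (Fin p) := {a | (a : ℕ) % 2 = 1}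
  have hsplit : parityDigits p = E ×ˢ E ∪ O ×ˢ O := by
    ext d
    simp only [parityDigits, E, O, Finset.mem_filter, Finset.mem_univ, true_and,
      Finset.mem_union, Finset.mem_product]
    omega
  have hdisj : Disjoint (E ×ˢ E) (O ×ˢ O) :=
    disjoint_product.2 (Or.inl (disjoint_filter.2 fun a _ h => by omega))
  have hEO : #E + #O = p := by
    have := card_filter_add_card_filter_not (s := univ) fun a : Fin p => (a : ℕ) % 2 = 0
    rw [card_univ, Fintype.card_fin] at this
    convert this using 3
    ext a
    simp only [O, Finset.mem_filter, Finset.mem_univ, true_and]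
    omega
  obtain ⟨q, rfl⟩ := hp
  have hO : #O = q := by
    rw [card_filter_fin_mod_two_eq_one]
    omega
  have hE : #E = q + 1 := by omega
  rw [hsplit, card_union_of_disjoint hdisj, card_product, card_product, hE, hO]
  ring

lemma ofDigits_eq_tsum {p : ℕ} (a : ℕ → Fin p) :
    ofDigits a = ∑' n, ((a n : ℕ) : ℝ) / (p : ℝ) ^ (n + 1) := by
  simp only [ofDigits, ofDigitsTerm, div_eq_mul_inv]

lemma carpet_parityDigits (p : ℕ) :
    carpet (parityDigits p) = {xy : ℝ × ℝ | ∃ x y : ℕ → ℕ,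
      (∀ n, x n < p) ∧ (∀ n, y n < p) ∧
      xy.1 = ∑' n : ℕ, (x n : ℝ) / (p : ℝ) ^ (n + 1) ∧
      xy.2 = ∑' n : ℕ, (y n : ℝ) / (p : ℝ) ^ (n + 1) ∧
      ∀ n, x n % 2 = y n % 2} := by
  ext ⟨u, v⟩
  constructor
  · rintro ⟨ω, hω⟩
    refine ⟨fun k => (ω k).val.1, fun k => (ω k).val.2, fun k => (ω k).val.1.isLt,
      fun k => (ω k).val.2.isLt, ?_, ?_, fun k => (mem_filter.1 (ω k).prop).2⟩
    · rw [← ofDigits_eq_tsum, ← hω]; rfl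
    · rw [← ofDigits_eq_tsum, ← hω]; rfl
  · rintro ⟨x, y, hx, hy, rfl, rfl, hxy⟩
    refine ⟨fun k => ⟨(⟨x k, hx k⟩, ⟨y k, hy k⟩), by simp [parityDigits, hxy k]⟩, ?_⟩
    simp only [carpetPoint, ofDigits_eq_tsum]

/-- the Hausdorff dimension of the fractal F_{0,∞} of pairs of
base-p expansions with digitwise-congruent-mod-2 digits equals
log((p²+1)/2)/log p. -/
theorem dimH_F0 (p : ℕ) (hp : p.Prime) (hodd : Odd p)
    (F : Set (ℝ × ℝ))
    (hF : F = {xy : ℝ × ℝ | ∃ x y : ℕ → ℕ,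
      (∀ n, x n < p) ∧ (∀ n, y n < p) ∧
      xy.1 = ∑' n : ℕ, (x n : ℝ) / (p : ℝ) ^ (n + 1) ∧
      xy.2 = ∑' n : ℕ, (y n : ℝ) / (p : ℝ) ^ (n + 1) ∧
      ∀ n, x n % 2 = y n % 2}) :
    dimH F = ENNReal.ofReal (Real.log (((p : ℝ) ^ 2 + 1) / 2) / Real.log p) := by
  have hcard := card_parityDigits hodd
  have hcardℝ : (#(parityDigits p) : ℝ) = ((p : ℝ) ^ 2 + 1) / 2 := by
    rw [eq_div_iff two_ne_zero, mul_comm]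
    exact_mod_cast hcard
  have hp₂ := hp.two_le
  rw [hF, ← carpet_parityDigits, dimH_carpet hp.one_lt (by nlinarith), ← hcardℝ, log_div_log]
end

section
/- Let K be a field, let s : ℤ → K be a doubly infinite sequence, and let r, a ∈ K with r ≠ 0. Define the geometric transform s^{(r,a)} : ℤ → K by s^{(r,a)}(i) = a·r^i·s(i). Then for every m ∈ ℕ and every n ∈ ℤ, one has W(s^{(r,a)})[m,n] = r^{n(m+1)}·a^{m+1}·W(s)[m,n], where r^{n(m+1)} is the (possibly negative) integer power of the unit r. (This is the scaling law underlying the relation between a number wall and the (r₀,a₀)-number wall of a geometric transform.) -/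
/-- scaling law for the number wall of a geometric transform:
W(s^{(r,a)})[m,n] = r^{n(m+1)} · a^{m+1} · W(s)[m,n]. -/
theorem numberWall_geometric_transform {K : Type*} [Field K]
    (s : ℤ → K) (r a : K) (hr : r ≠ 0)
    (t : ℤ → K) (ht : ∀ i : ℤ, t i = a * r ^ i * s i) :
    ∀ (m : ℕ) (n : ℤ),
      Matrix.det (Matrix.of fun i j : Fin (m + 1) =>
          t (((i : ℕ) : ℤ) - ((j : ℕ) : ℤ) + n))
        = r ^ (n * (m + 1 : ℤ)) * a ^ (m + 1) *
          Matrix.det (Matrix.of fun i j : Fin (m + 1) =>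
            s (((i : ℕ) : ℤ) - ((j : ℕ) : ℤ) + n)) := by
  intro m n
  have h : (Matrix.of fun i j : Fin (m + 1) =>
      t (((i : ℕ) : ℤ) - ((j : ℕ) : ℤ) + n)) =
      Matrix.of fun i j : Fin (m + 1) =>
        (a * r ^ n * r ^ ((i : ℕ) : ℤ)) *
          ((r ^ (-((j : ℕ) : ℤ))) *
            s (((i : ℕ) : ℤ) - ((j : ℕ) : ℤ) + n)) := by
    ext i j
    simp only [Matrix.of_apply, ht]
    rw [show ((i : ℕ) : ℤ) - ((j : ℕ) : ℤ) + n = n + (i : ℕ) + (-((j : ℕ) : ℤ)) by ring]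
    rw [zpow_add₀ hr, zpow_add₀ hr]
    ring
  rw [h]
  rw [show (Matrix.of fun i j : Fin (m + 1) =>
        (a * r ^ n * r ^ ((i : ℕ) : ℤ)) *
          ((r ^ (-((j : ℕ) : ℤ))) *
            s (((i : ℕ) : ℤ) - ((j : ℕ) : ℤ) + n)))
      = Matrix.of fun i j : Fin (m + 1) =>
        (fun k : Fin (m+1) => a * r ^ n * r ^ ((k : ℕ) : ℤ)) i *
          (Matrix.of fun i j : Fin (m + 1) =>
            (fun k : Fin (m+1) => r ^ (-((k : ℕ) : ℤ))) j *
              (Matrix.of fun i j : Fin (m + 1) =>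
                s (((i : ℕ) : ℤ) - ((j : ℕ) : ℤ) + n)) i j) i j from rfl]
  rw [Matrix.det_mul_column, Matrix.det_mul_row]
  rw [Finset.prod_mul_distrib, Finset.prod_mul_distrib]
  have h1 : (∏ _k : Fin (m+1), a) = a ^ (m+1) := by simp
  have h2 : (∏ _k : Fin (m+1), r ^ n) = r ^ (n * (m+1 : ℤ)) := by
    rw [Finset.prod_const, ← zpow_natCast (r ^ n), ← zpow_mul]
    simp [mul_comm]
  have h3 : (∏ k : Fin (m+1), r ^ ((k : ℕ) : ℤ)) *
      (∏ k : Fin (m+1), r ^ (-((k : ℕ) : ℤ))) = 1 := by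
    rw [← Finset.prod_mul_distrib]
    simp [← zpow_add₀ hr]
    exact Finset.prod_eq_one fun k _ => mul_inv_cancel₀ (pow_ne_zero _ hr)
  rw [h1, h2]
  calc a ^ (m+1) * r ^ (n * (m+1:ℤ)) * (∏ k : Fin (m+1), r ^ ((k : ℕ) : ℤ)) *
        ((∏ k : Fin (m+1), r ^ (-((k : ℕ) : ℤ))) *
          Matrix.det (Matrix.of fun i j : Fin (m + 1) =>
            s (((i : ℕ) : ℤ) - ((j : ℕ) : ℤ) + n)))
      = r ^ (n * (m+1:ℤ)) * a ^ (m+1) *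
        ((∏ k : Fin (m+1), r ^ ((k : ℕ) : ℤ)) *
          (∏ k : Fin (m+1), r ^ (-((k : ℕ) : ℤ)))) *
          Matrix.det (Matrix.of fun i j : Fin (m + 1) =>
            s (((i : ℕ) : ℤ) - ((j : ℕ) : ℤ) + n)) := by ring
    _ = _ := by rw [h3]; ring
end

section
/- Let K be a field and let s : ℕ → K with s(0) ≠ 0. Let u : ℕ → K be the sequence of coefficients of the multiplicative inverse of the power series ∑_{i≥0} s(i)·X^i in K[[X]], and let s^L : ℤ → K extend s by s^L(i) = 0 for i < 0. Then for every m ∈ ℕ, the determinant of the (m+1)×(m+1) Toeplitz matrix whose (i,j) entry is s^L(i − j + 1) equals (−1)^{m+1}·s(0)^{m+2}·u(m+1). (Wronski's formula: column 1 of the number wall of a one-sided sequence is, up to explicit geometric factors, the coefficient sequence of the inverse Laurent series.) -/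
/-!
Let `S` be the lower-triangular Toeplitz matrix `(s (i - j))` of size `m + 2`. Since `s * u = 1`
as power series, `S` maps the vector `(u 0, …, u (m + 1))` to the first unit vector, so Cramer's
rule gives `det S * u (m + 1) = adj(S) (m + 1, 0)`. That adjugate entry is `(-1) ^ (m + 1)` times
the minor of `S` without its first row and last column, which is the Toeplitz determinant
`(s (i - j + 1))`, and `det S = s 0 ^ (m + 2)`.
-/

open Finset Matrix

/-- The matrix `T_s(n; m)`, of size `m + 1`. -/
def toeplitz {R : Type*} (s : ℤ → R) (n : ℤ) (m : ℕ) : Matrix (Fin (m + 1)) (Fin (m + 1)) R :=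
  of fun i j => s ((i : ℕ) - (j : ℕ) + n)

def zeroExtend {R : Type*} [Zero R] (s : ℕ → R) (i : ℤ) : R :=
  if 0 ≤ i then s i.toNat else 0

section
variable {R : Type*}

@[simp]
theorem zeroExtend_natCast [Zero R] (s : ℕ → R) (n : ℕ) : zeroExtend s n = s n := by
  simp [zeroExtend]

theorem zeroExtend_of_neg [Zero R] (s : ℕ → R) {i : ℤ} (hi : i < 0) : zeroExtend s i = 0 :=
  if_neg hi.not_ge

theorem toeplitz_submatrix_succ_castSucc (s : ℤ → R) (n : ℤ) (m : ℕ) :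
    (toeplitz s n (m + 1)).submatrix Fin.succ Fin.castSucc = toeplitz s (n + 1) m := by
  ext i j
  simp only [toeplitz, submatrix_apply, of_apply, Fin.val_succ, Fin.val_castSucc]
  congr 1
  push_cast
  ring

theorem toeplitz_zero_zeroExtend_isLowerTriangular [Zero R] (s : ℕ → R) (m : ℕ) :
    (toeplitz (zeroExtend s) 0 m).IsLowerTriangular := fun i j hij =>
  zeroExtend_of_neg s (by simp only [add_zero]; exact sub_neg.2 (by exact_mod_cast hij))

theorem det_toeplitz_zero_zeroExtend [CommRing R] (s : ℕ → R) (m : ℕ) :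
    (toeplitz (zeroExtend s) 0 m).det = s 0 ^ (m + 1) := by
  rw [det_of_isLowerTriangular _ (toeplitz_zero_zeroExtend_isLowerTriangular s m)]
  simp [toeplitz, zeroExtend]

theorem toeplitz_zero_zeroExtend_mulVec [CommSemiring R] (s u : ℕ → R) (m : ℕ) :
    toeplitz (zeroExtend s) 0 m *ᵥ (fun j => u j) =
      fun i : Fin (m + 1) => PowerSeries.coeff (i : ℕ) (PowerSeries.mk s * PowerSeries.mk u) := by
  ext i
  rw [mul_comm, PowerSeries.coeff_mul, Nat.sum_antidiagonal_eq_sum_range_succ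
    (fun k l => PowerSeries.coeff k (PowerSeries.mk u) * PowerSeries.coeff l (PowerSeries.mk s))]
  simp only [mulVec, dotProduct, toeplitz, of_apply, add_zero, PowerSeries.coeff_mk]
  rw [Fin.sum_univ_eq_sum_range (fun j => zeroExtend s ((i : ℕ) - j) * u j),
    ← sum_subset (range_subset_range.2 i.is_lt)]
  · refine sum_congr rfl fun j hj => ?_
    rw [mem_range] at hj
    rw [mul_comm, ← Nat.cast_sub (by omega), zeroExtend_natCast]
  · intro j _ hj
    rw [mem_range, not_lt] at hj
    rw [zeroExtend_of_neg s (by omega), zero_mul]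

end

theorem Matrix.adjugate_mulVec_mulVec {n R : Type*} [Fintype n] [DecidableEq n] [CommRing R]
    (A : Matrix n n R) (v : n → R) : adjugate A *ᵥ (A *ᵥ v) = A.det • v := by
  rw [mulVec_mulVec, adjugate_mul, smul_mulVec, one_mulVec]

theorem wronski_formula_general {K : Type*} [Field K]
    (s : ℕ → K)
    (u : ℕ → K) (hu : PowerSeries.mk s * PowerSeries.mk u = 1)
    (sL : ℤ → K) (hsL : ∀ i : ℤ, sL i = if 0 ≤ i then s i.toNat else 0) :
    ∀ m : ℕ,
      Matrix.det (Matrix.of fun i j : Fin (m + 1) =>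
          sL (((i : ℕ) : ℤ) - ((j : ℕ) : ℤ) + 1))
        = (-1) ^ (m + 1) * (s 0) ^ (m + 2) * u (m + 1) := by
  obtain rfl : sL = zeroExtend s := funext hsL
  intro m
  set S := toeplitz (zeroExtend s) 0 (m + 1)
  have hSu : S *ᵥ (fun j => u j) = Pi.single 0 1 := by
    rw [toeplitz_zero_zeroExtend_mulVec, hu]
    ext i
    simp only [PowerSeries.coeff_one, Pi.single_apply, ← Fin.val_eq_zero_iff]
  have hcramer := congrFun (adjugate_mulVec_mulVec S fun j => u j) (Fin.last (m + 1))
  rw [hSu, mulVec_single_one, col_apply, adjugate_fin_succ_eq_det_submatrix, Fin.succAbove_zero,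
    Fin.succAbove_last, toeplitz_submatrix_succ_castSucc, det_toeplitz_zero_zeroExtend] at hcramer
  simp only [Fin.val_zero, Fin.val_last, zero_add, Pi.smul_apply, smul_eq_mul] at hcramer
  have hsign : ((-1 : K) ^ (m + 1)) ^ 2 = 1 := by rw [← pow_mul, pow_mul', neg_one_sq, one_pow]
  change (toeplitz (zeroExtend s) 1 m).det = _
  linear_combination (-1 : K) ^ (m + 1) * hcramer - (toeplitz (zeroExtend s) 1 m).det * hsign

/-- Wronski's formula: the determinant of the (m+1)×(m+1)
Toeplitz matrix of the one-sided sequence s^L at column index 1 equals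
(−1)^{m+1} · s(0)^{m+2} · u(m+1), where u is the coefficient sequence of the
inverse power series. -/
theorem wronski_formula {K : Type*} [Field K]
    (s : ℕ → K) (hs0 : s 0 ≠ 0)
    (u : ℕ → K) (hu : PowerSeries.mk s * PowerSeries.mk u = 1)
    (sL : ℤ → K) (hsL : ∀ i : ℤ, sL i = if 0 ≤ i then s i.toNat else 0) :
    ∀ m : ℕ,
      Matrix.det (Matrix.of fun i j : Fin (m + 1) =>
          sL (((i : ℕ) : ℤ) - ((j : ℕ) : ℤ) + 1))
        = (-1) ^ (m + 1) * (s 0) ^ (m + 2) * u (m + 1) :=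
  wronski_formula_general s u hu sL hsL
end

section
/- Let p be an odd prime, p₂ := (p−1)/2, and let x : ℤ → 𝔽_p be the doubly infinite sequence with x(p+k) = C(p₂, k/2) for 0 ≤ k ≤ p−1 (where C(p₂, k/2) is the binomial coefficient (p₂ choose k/2) reduced mod p when k is even, and 0 when k is odd), and x(i) = 0 for all other i ∈ ℤ. Then for all natural numbers 0 ≤ j ≤ p₂ and 0 ≤ i ≤ p₂ − 1, one has W(x)[2j, p+2i+1] = 0 in 𝔽_p. -/
/-- the entries d_{i,j} of the number wall of the first p
entries of the p-Cantor sequence padded with p zeroes on each side vanish. -/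
theorem base_case_d (p : ℕ) (hp : p.Prime) (hodd : Odd p)
    (x : ℤ → ZMod p)
    (hx : ∀ i : ℤ, x i =
      if (p : ℤ) ≤ i ∧ i < 2 * (p : ℤ) then
        (if (i - (p : ℤ)).toNat % 2 = 0 then
          ((((p - 1) / 2).choose ((i - (p : ℤ)).toNat / 2) : ℕ) : ZMod p)
        else 0)
      else 0) :
    ∀ j i : ℕ, j ≤ (p - 1) / 2 → i ≤ (p - 1) / 2 - 1 →
      Matrix.det (Matrix.of fun a b : Fin (2 * j + 1) =>
          x (((a : ℕ) : ℤ) - ((b : ℕ) : ℤ) + ((p : ℤ) + 2 * (i : ℤ) + 1)))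
        = 0 := by
  intro j i hj hi
  set M : Matrix (Fin (2 * j + 1)) (Fin (2 * j + 1)) (ZMod p) :=
    Matrix.of fun a b : Fin (2 * j + 1) =>
      x (((a : ℕ) : ℤ) - ((b : ℕ) : ℤ) + ((p : ℤ) + 2 * (i : ℤ) + 1)) with hM
  have hzero : ∀ a b : Fin (2 * j + 1), (a : ℕ) % 2 = (b : ℕ) % 2 → M a b = 0 := by
    intro a b hab
    show x _ = 0
    rw [hx]
    split_ifs with h1 h2
    · exfalso
      obtain ⟨hl, _⟩ := h1
      omega
    · rfl
    · rfl
  set D : Matrix (Fin (2 * j + 1)) (Fin (2 * j + 1)) (ZMod p) :=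
    Matrix.diagonal (fun a : Fin (2 * j + 1) => (-1 : ZMod p) ^ (a : ℕ)) with hD
  have hDD : D * D = 1 := by
    rw [hD, Matrix.diagonal_mul_diagonal]
    convert Matrix.diagonal_one
    rw [← pow_add]
    exact Even.neg_one_pow ⟨_, rfl⟩
  have hDMD : D * M * D = -M := by
    ext a b
    rw [Matrix.mul_diagonal, Matrix.diagonal_mul]
    rcases Nat.even_or_odd ((a : ℕ) + (b : ℕ)) with he | ho
    · have : M a b = 0 := hzero a b (by obtain ⟨c, hc⟩ := he; omega)
      simp [this]
    · have : (-1 : ZMod p) ^ (a : ℕ) * ((-1 : ZMod p) ^ (b : ℕ)) = -1 := by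
        rw [← pow_add]; exact ho.neg_one_pow
      rw [Matrix.neg_apply]
      linear_combination M a b * this
  have hdet := congrArg Matrix.det hDMD
  rw [Matrix.det_mul, Matrix.det_mul, Matrix.det_neg, Fintype.card_fin] at hdet
  have hDet1 : D.det * D.det = 1 := by rw [← Matrix.det_mul, hDD, Matrix.det_one]
  have hodd' : Odd (2 * j + 1) := ⟨j, by ring⟩
  rw [hodd'.neg_one_pow] at hdet
  have h1 : M.det = -M.det := by
    linear_combination hdet - M.det * hDet1
  have h2 : (2 : ZMod p) * M.det = 0 := by linear_combination h1
  have hp2 : (2 : ZMod p) ≠ 0 := by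
    have : ((2 : ℕ) : ZMod p) ≠ 0 := by
      rw [Ne, ZMod.natCast_eq_zero_iff]
      intro hdvd
      have h22 := (Nat.prime_dvd_prime_iff_eq hp Nat.prime_two).mp hdvd
      obtain ⟨k, hk⟩ := hodd
      omega
    simpa using this
  haveI : Fact p.Prime := ⟨hp⟩
  exact (mul_eq_zero.mp h2).resolve_left hp2
end
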